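/- For a total priority relation ≻, the unique repair obtained by greedily adding facts in decreasing ≻-order (adding each fact if consistency is preserved) is Pareto-optimal. -/

import Mathlib

variable {α : Type*}

def DownwardClosed (Cons : Set (Set α)) : Prop :=
  ∀ S ∈ Cons, ∀ S' ⊆ S, S' ∈ Cons

def IsConflict (D : Set α) (Cons : Set (Set α)) (C : Set α) : Prop :=
  C ⊆ D ∧ C ∉ Cons ∧ ∀ C' ⊂ C, C' ∈ Cons

def IsRepair (D : Set α) (Cons : Set (Set α)) (R : Set α) : Prop :=
  R ⊆ D ∧ R ∈ Cons ∧ ∀ S, S ⊆ D → S ∈ Cons → R ⊆ S → S = R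

def Acyclic (pr : α → α → Prop) : Prop :=
  ∀ a, ¬ Relation.TransGen pr a a

def PriorityRel (D : Set α) (Cons : Set (Set α)) (pr : α → α → Prop) : Prop :=
  Acyclic pr ∧ ∀ a b, pr a b → ∃ C, IsConflict D Cons C ∧ a ∈ C ∧ b ∈ C

def ParetoImp (Cons : Set (Set α)) (pr : α → α → Prop) (D R B : Set α) : Prop :=
  B ⊆ D ∧ B ∈ Cons ∧ ∃ β ∈ B \ R, ∀ a ∈ R \ B, pr β a

def GlobalImp (Cons : Set (Set α)) (pr : α → α → Prop) (D R B : Set α) : Prop :=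
  B ⊆ D ∧ B ∈ Cons ∧ B ≠ R ∧ ∀ a ∈ R \ B, ∃ β ∈ B \ R, pr β a

def ParetoOpt (Cons : Set (Set α)) (pr : α → α → Prop) (D R : Set α) : Prop :=
  IsRepair D Cons R ∧ ∀ B, ¬ ParetoImp Cons pr D R B

def GlobalOpt (Cons : Set (Set α)) (pr : α → α → Prop) (D R : Set α) : Prop :=
  IsRepair D Cons R ∧ ∀ B, ¬ GlobalImp Cons pr D R B

def TotalPrio (D : Set α) (Cons : Set (Set α)) (pr : α → α → Prop) : Prop :=
  ∀ a b, a ≠ b → (∃ C, IsConflict D Cons C ∧ a ∈ C ∧ b ∈ C) → pr a b ∨ pr b a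

def IsCompletion (D : Set α) (Cons : Set (Set α)) (pr pr' : α → α → Prop) : Prop :=
  PriorityRel D Cons pr' ∧ TotalPrio D Cons pr' ∧ ∀ a b, pr a b → pr' a b

def ComplOpt (Cons : Set (Set α)) (pr : α → α → Prop) (D R : Set α) : Prop :=
  ∃ pr', IsCompletion D Cons pr pr' ∧ GlobalOpt Cons pr' D R

open Classical in
/-- Greedy construction: process the elements of the list in order, adding each element
whenever consistency is preserved. -/
noncomputable def greedy (Cons : Set (Set α)) : List α → Set α → Set α
  | [], S => S
  | a :: l, S => greedy Cons l (if insert a S ∈ Cons then insert a S else S)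

/-
When the greedy pass rejects a fact `a`, the facts accepted so far form an inconsistent set
together with `a`, and each of them was processed before `a`, so `a` does not dominate any of them.
A consistent `B` containing `a` must therefore miss one of these facts, which `a` does not beat,
so `B` is no Pareto improvement; with `B ⊇ R` the same blocker shows that `R` is maximal.
-/

section Greedy

variable {Cons : Set (Set α)}

lemma subset_greedy (l : List α) (S : Set α) : S ⊆ greedy Cons l S := by
  induction l generalizing S with
  | nil => exact subset_rfl
  | cons c l ih =>
    simp only [greedy]
    split
    · exact (Set.subset_insert c S).trans (ih _)
    · exact ih S

lemma greedy_mem (l : List α) {S : Set α} (hS : S ∈ Cons) : greedy Cons l S ∈ Cons := by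
  induction l generalizing S with
  | nil => exact hS
  | cons c l ih =>
    simp only [greedy]
    split
    · exact ih ‹_›
    · exact ih hS

lemma greedy_subset_union (l : List α) (S : Set α) : greedy Cons l S ⊆ S ∪ {x | x ∈ l} := by
  induction l generalizing S with
  | nil => simp [greedy]
  | cons c l ih =>
    simp only [greedy]
    refine (ih _).trans (Set.union_subset ?_ fun x hx => Or.inr (List.mem_cons_of_mem c hx))
    split
    · exact Set.insert_subset (Or.inr List.mem_cons_self) Set.subset_union_left
    · exact Set.subset_union_left

open Classical in
lemma exists_blocker_of_not_mem_greedy {pr : α → α → Prop} {l : List α}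
    (hl : l.Pairwise fun a b => ¬ pr b a) {S : Set α} {a : α} (ha : a ∈ l)
    (hna : a ∉ greedy Cons l S) :
    ∃ T ⊆ greedy Cons l S, insert a T ∉ Cons ∧ ∀ b ∈ T \ S, ¬ pr a b := by
  induction l generalizing S with
  | nil => simp at ha
  | cons c l ih =>
    obtain ⟨hc, hl⟩ := List.pairwise_cons.mp hl
    simp only [greedy] at hna ⊢
    rcases List.mem_cons.mp ha with rfl | hal
    · have hrej : insert a S ∉ Cons := fun h =>
        hna (subset_greedy l _ (by simpa only [if_pos h] using Set.mem_insert a S))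
      refine ⟨S, ?_, hrej, by simp⟩
      simpa only [if_neg hrej] using subset_greedy l S
    · obtain ⟨T, hT, hins, hdom⟩ := ih hl hal hna
      have hstep : (if insert c S ∈ Cons then insert c S else S) ⊆ insert c S := by
        split
        · exact subset_rfl
        · exact Set.subset_insert c S
      refine ⟨T, hT, hins, fun b ⟨hbT, hbS⟩ => ?_⟩
      by_cases hb : b ∈ if insert c S ∈ Cons then insert c S else S
      · obtain rfl : b = c := (Set.mem_insert_iff.mp (hstep hb)).resolve_right hbS
        exact hc a hal
      · exact hdom b ⟨hbT, hb⟩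

end Greedy

def IsBlocked (Cons : Set (Set α)) (pr : α → α → Prop) (R : Set α) (a : α) : Prop :=
  ∃ T ⊆ R, insert a T ∉ Cons ∧ ∀ b ∈ T, ¬ pr a b

section Blocked

variable {D : Set α} {Cons : Set (Set α)} {pr : α → α → Prop} {R : Set α}

lemma isRepair_of_forall_isBlocked (hdc : DownwardClosed Cons) (hRD : R ⊆ D) (hRC : R ∈ Cons)
    (hblk : ∀ a ∈ D \ R, IsBlocked Cons pr R a) : IsRepair D Cons R := by
  refine ⟨hRD, hRC, fun S hSD hSC hRS => ?_⟩
  by_contra hne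
  obtain ⟨a, haS, haR⟩ := Set.not_subset.mp fun h => hne (h.antisymm hRS)
  obtain ⟨T, hTR, hins, -⟩ := hblk a ⟨hSD haS, haR⟩
  exact hins (hdc S hSC _ (Set.insert_subset haS (hTR.trans hRS)))

lemma not_paretoImp_of_forall_isBlocked (hdc : DownwardClosed Cons)
    (hblk : ∀ a ∈ D \ R, IsBlocked Cons pr R a) (B : Set α) : ¬ ParetoImp Cons pr D R B := by
  rintro ⟨hBD, hBC, β, ⟨hβB, hβR⟩, hβ⟩
  obtain ⟨T, hTR, hins, hdom⟩ := hblk β ⟨hBD hβB, hβR⟩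
  obtain ⟨b, hbT, hbB⟩ :=
    Set.not_subset.mp fun hTB => hins (hdc B hBC _ (Set.insert_subset hβB hTB))
  exact hdom b hbT (hβ b ⟨hTR hbT, hbB⟩)

lemma paretoOpt_of_forall_isBlocked (hdc : DownwardClosed Cons) (hRD : R ⊆ D) (hRC : R ∈ Cons)
    (hblk : ∀ a ∈ D \ R, IsBlocked Cons pr R a) : ParetoOpt Cons pr D R :=
  ⟨isRepair_of_forall_isBlocked hdc hRD hRC hblk, not_paretoImp_of_forall_isBlocked hdc hblk⟩

end Blocked

theorem greedy_paretoOpt_of_total_general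
    (D : Set α) (Cons : Set (Set α))
    (hdc : DownwardClosed Cons) (hempty : (∅ : Set α) ∈ Cons)
    (pr : α → α → Prop)
    (l : List α) (hall : ∀ a ∈ D, a ∈ l) (hlD : ∀ a ∈ l, a ∈ D)
    (horder : l.Pairwise (fun a b => ¬ pr b a)) :
    ParetoOpt Cons pr D (greedy Cons l ∅) := by
  have hRD : greedy Cons l ∅ ⊆ D := fun x hx => by
    simpa using hlD x (by simpa using greedy_subset_union l ∅ hx)
  refine paretoOpt_of_forall_isBlocked hdc hRD (greedy_mem l hempty) fun a ⟨haD, haR⟩ => ?_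
  obtain ⟨T, hTR, hins, hdom⟩ := exists_blocker_of_not_mem_greedy horder (hall a haD) haR
  exact ⟨T, hTR, hins, fun b hb => hdom b ⟨hb, Set.notMem_empty b⟩⟩

/-- For a total priority relation ≻ (relating exactly the pairs of distinct facts
co-occurring in some conflict), the repair obtained by greedily adding facts in
decreasing ≻-order (adding each fact if consistency is preserved) is Pareto-optimal. -/
theorem greedy_paretoOpt_of_total
    (D : Set α) (hD : D.Finite) (Cons : Set (Set α))
    (hdc : DownwardClosed Cons) (hempty : (∅ : Set α) ∈ Cons)
    (hsing : ∀ a ∈ D, ({a} : Set α) ∈ Cons)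
    (pr : α → α → Prop) (hacyc : Acyclic pr)
    (hprConf : ∀ a b, pr a b → a ≠ b ∧ ∃ C, IsConflict D Cons C ∧ a ∈ C ∧ b ∈ C)
    (htot : TotalPrio D Cons pr)
    (l : List α) (hnodup : l.Nodup) (hall : ∀ a ∈ D, a ∈ l) (hlD : ∀ a ∈ l, a ∈ D)
    (horder : l.Pairwise (fun a b => ¬ pr b a)) :
    ParetoOpt Cons pr D (greedy Cons l ∅) :=
  greedy_paretoOpt_of_total_general D Cons hdc hempty pr l hall hlD horder
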